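/- arXiv:1205.5542 — 8 statements merged into one kernel-verified Lean document; each statement's English description precedes it below -/
import Mathlib

section
/- Let ρ be a finite positive Borel measure on ℝ, a ∈ ℝ, and define F(z) = a + z + ∫ (1 + sz)/(s - z) dρ(s) for z in the upper half-plane. If α ∈ ℝ, then the nontangential limit of (z - α)F(z) as z → α equals -(α² + 1)ρ({α}). -/
open MeasureTheory Filter Topology Complex

/-
Since `(1 + s z)/(s - z) = z + (1 + z²)/(s - z)` and, inside the cone `|Re z - α| ≤ M Im z`,
`|z - α| ≤ (M + 1) Im z ≤ (M + 1) |s - z|`, the integrand `(z - α)(1 + s z)/(s - z)` is bounded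
uniformly in `s` as `z → α` in the cone. Pointwise it tends to `-(α² + 1)` at `s = α` and to `0`
elsewhere, so dominated convergence gives the limit `-(α² + 1) ρ {α}`.
-/

def nontangentialCone (α M : ℝ) : Set ℂ := {z : ℂ | 0 < z.im ∧ |z.re - α| ≤ M * z.im}

lemma im_le_norm_ofReal_sub (s : ℝ) (z : ℂ) : z.im ≤ ‖(s : ℂ) - z‖ :=
  (le_abs_self _).trans (by simpa using abs_im_le_norm ((s : ℂ) - z))

lemma ofReal_sub_ne_zero_of_im_pos (s : ℝ) {z : ℂ} (hz : 0 < z.im) : (s : ℂ) - z ≠ 0 :=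
  norm_pos_iff.1 (hz.trans_le (im_le_norm_ofReal_sub s z))

lemma one_add_mul_div_sub_eq {s z : ℂ} (h : s - z ≠ 0) :
    (1 + s * z) / (s - z) = z + (1 + z ^ 2) / (s - z) := by
  field_simp
  ring

namespace nontangentialCone

variable {α M : ℝ} {z : ℂ}

lemma ne_ofReal (hz : z ∈ nontangentialCone α M) : z ≠ α := by
  rintro rfl
  simpa using hz.1

lemma norm_sub_le (hz : z ∈ nontangentialCone α M) (s : ℝ) :
    ‖z - α‖ ≤ (M + 1) * ‖(s : ℂ) - z‖ := by
  obtain ⟨him, hre⟩ := hz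
  have hM : 0 ≤ M + 1 := by nlinarith [abs_nonneg (z.re - α)]
  calc ‖z - α‖ ≤ |(z - α).re| + |(z - α).im| := norm_le_abs_re_add_abs_im _
    _ = |z.re - α| + z.im := by simp [abs_of_pos him]
    _ ≤ (M + 1) * z.im := by linarith
    _ ≤ (M + 1) * ‖(s : ℂ) - z‖ := mul_le_mul_of_nonneg_left (im_le_norm_ofReal_sub s z) hM

lemma norm_mul_kernel_le (hz : z ∈ nontangentialCone α M) (s : ℝ) :
    ‖(z - α) * ((1 + s * z) / (s - z))‖ ≤ ‖z - α‖ * ‖z‖ + (M + 1) * ‖1 + z ^ 2‖ := by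
  have hne := ofReal_sub_ne_zero_of_im_pos s hz.1
  have hpos : 0 < ‖(s : ℂ) - z‖ := norm_pos_iff.2 hne
  rw [one_add_mul_div_sub_eq hne, mul_add]
  calc _ ≤ ‖(z - α) * z‖ + ‖(z - α) * ((1 + z ^ 2) / (s - z))‖ := norm_add_le _ _
    _ = ‖z - α‖ * ‖z‖ + ‖z - α‖ / ‖(s : ℂ) - z‖ * ‖1 + z ^ 2‖ := by
      rw [norm_mul, norm_mul, norm_div]; ring
    _ ≤ _ := by
      gcongr
      exact (div_le_iff₀ hpos).2 (norm_sub_le hz s)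

end nontangentialCone

lemma tendsto_mul_kernel_nhdsNE (s α : ℝ) :
    Tendsto (fun z : ℂ => (z - α) * ((1 + s * z) / (s - z))) (𝓝[≠] (α : ℂ))
      (𝓝 (({α} : Set ℝ).indicator (fun _ => -((α : ℂ) ^ 2 + 1)) s)) := by
  rcases eq_or_ne s α with rfl | hs
  · rw [Set.indicator_of_mem (Set.mem_singleton _)]
    have hlin : Tendsto (fun z : ℂ => -(1 + s * z)) (𝓝[≠] (s : ℂ)) (𝓝 (-((s : ℂ) ^ 2 + 1))) := by
      have hcont : Continuous fun z : ℂ => -(1 + s * z) := by fun_prop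
      convert (hcont.tendsto (s : ℂ)).mono_left nhdsWithin_le_nhds using 2
      ring
    refine hlin.congr' ?_
    filter_upwards [self_mem_nhdsWithin] with z hz
    have : (s : ℂ) - z ≠ 0 := sub_ne_zero.2 (Ne.symm hz)
    field_simp
    ring
  · rw [Set.indicator_of_notMem (Set.notMem_singleton_iff.2 hs)]
    have hsα : (s : ℂ) - α ≠ 0 := sub_ne_zero.2 (mod_cast hs)
    have hcont : ContinuousAt (fun z : ℂ => (z - α) * ((1 + s * z) / (s - z))) α := by
      fun_prop (disch := exact hsα)
    simpa using hcont.tendsto.mono_left nhdsWithin_le_nhds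

theorem tendsto_integral_mul_kernel (ρ : Measure ℝ) [IsFiniteMeasure ρ] (α M : ℝ) :
    Tendsto (fun z : ℂ => ∫ s : ℝ, (z - α) * ((1 + s * z) / (s - z)) ∂ρ)
      (𝓝[nontangentialCone α M] (α : ℂ)) (𝓝 (-((α : ℂ) ^ 2 + 1) * (ρ {α}).toReal)) := by
  set B : ℂ → ℝ := fun z => ‖z - α‖ * ‖z‖ + (M + 1) * ‖1 + z ^ 2‖
  have hB : ∀ᶠ z in 𝓝[nontangentialCone α M] (α : ℂ), B z < B α + 1 :=
    ((Continuous.tendsto (by fun_prop) _).mono_left nhdsWithin_le_nhds).eventually_lt_const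
      (lt_add_one _)
  have hlim := tendsto_integral_filter_of_dominated_convergence (μ := ρ) (fun _ => B α + 1)
    (Eventually.of_forall fun z => (by fun_prop : Measurable _).aestronglyMeasurable)
    (by
      filter_upwards [hB, self_mem_nhdsWithin] with z hBz hz
      exact ae_of_all _ fun s => (nontangentialCone.norm_mul_kernel_le hz s).trans hBz.le)
    (integrable_const _)
    (ae_of_all _ fun s => (tendsto_mul_kernel_nhdsNE s α).mono_left
      (nhdsWithin_mono _ fun _ hz => nontangentialCone.ne_ofReal hz))
  rwa [integral_indicator_const _ (measurableSet_singleton α), measureReal_def, real_smul,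
    mul_comm] at hlim

theorem stmt_2_general (ρ : Measure ℝ) [IsFiniteMeasure ρ] (a α : ℝ)
    (F : ℂ → ℂ)
    (hF : ∀ z : ℂ, 0 < z.im →
      F z = (a : ℂ) + z + ∫ s : ℝ, (1 + (s : ℂ) * z) / ((s : ℂ) - z) ∂ρ)
    (M : ℝ) :
    Tendsto (fun z : ℂ => (z - (α : ℂ)) * F z)
      (𝓝[{z : ℂ | 0 < z.im ∧ |z.re - α| ≤ M * z.im}] (α : ℂ))
      (𝓝 (-(((α : ℂ) ^ 2 + 1)) * ((ρ {α}).toReal : ℂ))) := by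
  have hpoly : Tendsto (fun z : ℂ => (z - α) * (a + z)) (𝓝[nontangentialCone α M] (α : ℂ))
      (𝓝 0) := by
    have hcont : Continuous fun z : ℂ => (z - α) * (a + z) := by fun_prop
    simpa using (hcont.tendsto (α : ℂ)).mono_left nhdsWithin_le_nhds
  have hsum := hpoly.add (tendsto_integral_mul_kernel ρ α M)
  rw [zero_add] at hsum
  refine hsum.congr' ?_
  filter_upwards [self_mem_nhdsWithin] with z hz
  rw [hF z hz.1, integral_const_mul]
  ring

theorem stmt_2 (ρ : Measure ℝ) [IsFiniteMeasure ρ] (a α : ℝ)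
    (F : ℂ → ℂ)
    (hF : ∀ z : ℂ, 0 < z.im →
      F z = (a : ℂ) + z + ∫ s : ℝ, (1 + (s : ℂ) * z) / ((s : ℂ) - z) ∂ρ)
    (M : ℝ) (hM : 0 < M) :
    Tendsto (fun z : ℂ => (z - (α : ℂ)) * F z)
      (𝓝[{z : ℂ | 0 < z.im ∧ |z.re - α| ≤ M * z.im}] (α : ℂ))
      (𝓝 (-(((α : ℂ) ^ 2 + 1)) * ((ρ {α}).toReal : ℂ))) :=
  stmt_2_general ρ a α F hF M
end

section
/- Let ρ be a finite positive Borel measure on ℝ and define g(x) = ∫ (s² + 1)/(s - x)² dρ(s) ∈ [0, ∞]. If g(x) ≤ 1/(t-1) for all x in an open interval I (for some t > 1), then ρ(I) = 0. -/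
/-!
On `Ioc c d` the integrand `(s² + 1) / (s - c)²` is at least `1 / (d - c)²`, so the bound on `g`
at `c` gives `ρ (Ioc c d) ≤ (d - c)² / (t - 1)`. Because this bound is quadratic in the length,
cutting an interval into `n` equal pieces bounds its mass by `1/n` of it, so every such interval
is `ρ`-null, and `I` is covered by countably many of them.
-/

open MeasureTheory Set Filter Topology

namespace MeasureTheory

/-- The singular point `c` is kept out of the interval: at `s = c` the integrand is the junk value
`(c² + 1) / 0 = 0`. -/
theorem measure_Ioc_le_sq_mul_lintegral (ρ : Measure ℝ) (c d : ℝ) :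
    ρ (Ioc c d) ≤
      ENNReal.ofReal ((d - c) ^ 2) * ∫⁻ s, ENNReal.ofReal ((s ^ 2 + 1) / (s - c) ^ 2) ∂ρ := by
  calc ρ (Ioc c d) = ∫⁻ _ in Ioc c d, 1 ∂ρ := (setLIntegral_one _).symm
    _ ≤ ∫⁻ s in Ioc c d,
          ENNReal.ofReal ((d - c) ^ 2) * ENNReal.ofReal ((s ^ 2 + 1) / (s - c) ^ 2) ∂ρ := by
      refine setLIntegral_mono' measurableSet_Ioc fun s ⟨hcs, hsd⟩ => ?_
      rw [← ENNReal.ofReal_mul (sq_nonneg _), ← ENNReal.ofReal_one]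
      apply ENNReal.ofReal_le_ofReal
      rw [mul_div_assoc', le_div_iff₀ (by nlinarith)]
      nlinarith [sq_nonneg s, mul_le_mul_of_nonneg_left (sq_nonneg s) (sq_nonneg (d - c))]
    _ ≤ ∫⁻ s, ENNReal.ofReal ((d - c) ^ 2) * ENNReal.ofReal ((s ^ 2 + 1) / (s - c) ^ 2) ∂ρ :=
      setLIntegral_le_lintegral _ _
    _ = _ := lintegral_const_mul' _ _ ENNReal.ofReal_ne_top

section SquareBound

variable {ρ : Measure ℝ} {K u v : ℝ}
  (hρ : ∀ c d, u ≤ c → c < d → d ≤ v → ρ (Ioc c d) ≤ ENNReal.ofReal (K * (d - c) ^ 2))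
include hρ

theorem measure_Ioc_add_mul_le_of_le_mul_sq {δ : ℝ} (hδ : 0 < δ) (n : ℕ) (hn : u + n * δ ≤ v) :
    ρ (Ioc u (u + n * δ)) ≤ n * ENNReal.ofReal (K * δ ^ 2) := by
  induction n with
  | zero => simp
  | succ n ih =>
    push_cast at hn ⊢
    have hstep : u + n * δ < u + (n + 1) * δ := by linarith
    calc ρ (Ioc u (u + (n + 1) * δ))
        = ρ (Ioc u (u + n * δ) ∪ Ioc (u + n * δ) (u + (n + 1) * δ)) := by
          rw [Ioc_union_Ioc_eq_Ioc (by nlinarith [n.cast_nonneg (α := ℝ)]) hstep.le]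
      _ ≤ ρ (Ioc u (u + n * δ)) + ρ (Ioc (u + n * δ) (u + (n + 1) * δ)) := measure_union_le _ _
      _ ≤ n * ENNReal.ofReal (K * δ ^ 2) + ENNReal.ofReal (K * δ ^ 2) := by
          gcongr
          · exact ih (by linarith)
          · refine (hρ _ _ (by nlinarith [n.cast_nonneg (α := ℝ)]) hstep hn).trans_eq ?_
            ring_nf
      _ = (n + 1) * ENNReal.ofReal (K * δ ^ 2) := by rw [add_one_mul]

theorem measure_Ioc_eq_zero_of_le_mul_sq : ρ (Ioc u v) = 0 := by
  rcases le_or_gt v u with hvu | huv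
  · rw [Ioc_eq_empty_of_le hvu, measure_empty]
  have hbound : ∀ n : ℕ, 0 < n → ρ (Ioc u v) ≤ ENNReal.ofReal (K * (v - u) ^ 2 / n) := by
    intro n hn
    have hn' : (0 : ℝ) < n := Nat.cast_pos.mpr hn
    have hsplit : u + n * ((v - u) / n) = v := by field_simp; ring
    calc ρ (Ioc u v) ≤ n * ENNReal.ofReal (K * ((v - u) / n) ^ 2) := by
          simpa only [hsplit] using
            measure_Ioc_add_mul_le_of_le_mul_sq hρ (div_pos (sub_pos.2 huv) hn') n hsplit.le
      _ = ENNReal.ofReal (K * (v - u) ^ 2 / n) := by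
          rw [← ENNReal.ofReal_natCast, ← ENNReal.ofReal_mul hn'.le]
          congr 1
          field_simp
  have hlim : Tendsto (fun n : ℕ => ENNReal.ofReal (K * (v - u) ^ 2 / n)) atTop (𝓝 0) := by
    simpa using ENNReal.tendsto_ofReal (tendsto_const_div_atTop_nhds_zero_nat (K * (v - u) ^ 2))
  exact nonpos_iff_eq_zero.mp <|
    ge_of_tendsto hlim (eventually_atTop.mpr ⟨1, fun n hn => hbound n hn⟩)

end SquareBound

end MeasureTheory

theorem stmt_3_general (ρ : Measure ℝ) (t : ℝ)
    (a b : ℝ)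
    (hg : ∀ x ∈ Ioo a b,
      (∫⁻ s : ℝ, ENNReal.ofReal ((s ^ 2 + 1) / (s - x) ^ 2) ∂ρ)
        ≤ ENNReal.ofReal (1 / (t - 1))) :
    ρ (Ioo a b) = 0 := by
  refine measure_null_of_locally_null _ fun x hx => ?_
  obtain ⟨c, hac, hcx⟩ := exists_between hx.1
  obtain ⟨d, hxd, hdb⟩ := exists_between hx.2
  refine ⟨Ioc c d, mem_nhdsWithin_of_mem_nhds (Ioc_mem_nhds hcx hxd), ?_⟩
  refine measure_Ioc_eq_zero_of_le_mul_sq (K := 1 / (t - 1)) fun c' d' hc' hcd' hd' => ?_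
  calc ρ (Ioc c' d')
      ≤ ENNReal.ofReal ((d' - c') ^ 2) *
          ∫⁻ s, ENNReal.ofReal ((s ^ 2 + 1) / (s - c') ^ 2) ∂ρ :=
        measure_Ioc_le_sq_mul_lintegral ρ c' d'
    _ ≤ ENNReal.ofReal ((d' - c') ^ 2) * ENNReal.ofReal (1 / (t - 1)) := by
        gcongr
        exact hg c' ⟨by linarith, by linarith⟩
    _ = ENNReal.ofReal (1 / (t - 1) * (d' - c') ^ 2) := by
        rw [← ENNReal.ofReal_mul (sq_nonneg _), mul_comm]

theorem stmt_3 (ρ : Measure ℝ) [IsFiniteMeasure ρ] (t : ℝ) (ht : 1 < t)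
    (a b : ℝ) (hab : a < b)
    (hg : ∀ x ∈ Ioo a b,
      (∫⁻ s : ℝ, ENNReal.ofReal ((s ^ 2 + 1) / (s - x) ^ 2) ∂ρ)
        ≤ ENNReal.ofReal (1 / (t - 1))) :
    ρ (Ioo a b) = 0 :=
  stmt_3_general ρ t a b hg
end

section
/- Let ρ be a finite positive Borel measure on ℝ and t > 1. The condition Im H_t(z) > 0 for all z in the upper half-plane, where H_t(z) = tz - (t-1)(a + z + ∫ (1+sz)/(s-z) dρ(s)), holds if and only if ρ is the zero measure. -/
/-!
For `z = x + iy`, `Im H_t(z) = y (1 - (t - 1) ∫ (1 + s²) / ((s - x)² + y²) dρ(s))`, so positivity of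
`Im H_t` on the upper half-plane bounds all these integrals by `1 / (t - 1)`. Since the integrand is
at least `1 / ((b - a)² / 4 + y²)` on `[a, b]` when `x` is its midpoint, Chebyshev's inequality and
`y → 0` give `ρ [a, b] ≤ (b - a)² / (4 (t - 1))`. Cutting `[a, b]` into `n` equal pieces then gives
`ρ [a, b] = O(1 / n)`, so `ρ` vanishes on every compact interval.
-/

open MeasureTheory Complex Set Filter Topology

theorem MeasureTheory.Measure.measureReal_Icc_add_mul_le {ρ : Measure ℝ} {C : ℝ} (h : ∀ a b, a ≤ b → ρ.real (Icc a b) ≤ C * (b - a) ^ 2) (a : ℝ) {r : ℝ}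
    (hr : 0 ≤ r) (n : ℕ) :
    ρ.real (Icc a (a + (n + 1) * r)) ≤ (n + 1) * (C * r ^ 2) := by
  induction n with
  | zero => simpa using h a (a + r) (by linarith)
  | succ n ih =>
    have hsplit : Icc a (a + (n + 1 + 1) * r) =
        Icc a (a + (n + 1) * r) ∪ Icc (a + (n + 1) * r) (a + (n + 1) * r + r) := by
      rw [Icc_union_Icc_eq_Icc (le_add_of_nonneg_right (by positivity)) (by linarith)]
      ring_nf
    push_cast
    rw [hsplit]
    calc _ ≤ ρ.real (Icc a (a + (n + 1) * r)) +
          ρ.real (Icc (a + (n + 1) * r) (a + (n + 1) * r + r)) := measureReal_union_le _ _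
      _ ≤ (n + 1) * (C * r ^ 2) + C * r ^ 2 := by
        gcongr
        simpa using h (a + (n + 1) * r) (a + (n + 1) * r + r) (by linarith)
      _ = _ := by ring

theorem MeasureTheory.Measure.eq_zero_of_measureReal_Icc_le_sq {ρ : Measure ℝ}
    [IsLocallyFiniteMeasure ρ] (C : ℝ) (h : ∀ a b, a ≤ b → ρ.real (Icc a b) ≤ C * (b - a) ^ 2) :
    ρ = 0 := by
  refine ρ.ext_of_Icc 0 fun a b hab => ?_
  suffices ρ.real (Icc a b) ≤ 0 by
    simpa using (measureReal_eq_zero_iff measure_Icc_lt_top.ne).1 (this.antisymm measureReal_nonneg)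
  have hcover (n : ℕ) : ρ.real (Icc a b) ≤ C * (b - a) ^ 2 * (1 / ((n : ℝ) + 1)) := by
    have hn : (0 : ℝ) < n + 1 := by positivity
    have := ρ.measureReal_Icc_add_mul_le h a (div_nonneg (sub_nonneg.2 hab) hn.le) n
    rw [mul_div_cancel₀ _ hn.ne', add_sub_cancel] at this
    exact this.trans_eq (by field_simp)
  simpa using ge_of_tendsto' (tendsto_one_div_add_atTop_nhds_zero_nat.const_mul _) hcover

theorem im_one_add_mul_div_sub (s : ℝ) (z : ℂ) :
    ((1 + s * z) / (s - z)).im = z.im * ((1 + s ^ 2) / ((s - z.re) ^ 2 + z.im ^ 2)) := by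
  have hnormSq : normSq (s - z) = (s - z.re) ^ 2 + z.im ^ 2 := by
    simp [normSq_apply]; ring
  rw [div_im, hnormSq]
  simp only [add_re, add_im, mul_re, mul_im, sub_re, sub_im, one_re, one_im, ofReal_re,
    ofReal_im]
  ring

theorem norm_one_add_mul_div_sub_le (s : ℝ) {z : ℂ} (hz : z.im ≠ 0) :
    ‖(1 + s * z) / (s - z)‖ ≤ ‖z‖ + ‖1 + z ^ 2‖ / |z.im| := by
  have hsz : (s : ℂ) - z ≠ 0 := fun h => hz (by simpa using congrArg im h)
  have hdecomp : (1 + s * z) / (s - z) = z + (1 + z ^ 2) / (s - z) := by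
    field_simp; ring
  have him_le : |z.im| ≤ ‖(s : ℂ) - z‖ := by
    simpa using abs_im_le_norm ((s : ℂ) - z)
  rw [hdecomp]
  refine (norm_add_le _ _).trans (add_le_add_right ?_ _)
  rw [norm_div]
  gcongr

section

variable (ρ : Measure ℝ) [IsFiniteMeasure ρ]

theorem integrable_one_add_mul_div_sub {z : ℂ} (hz : z.im ≠ 0) :
    Integrable (fun s : ℝ => (1 + s * z) / (s - z)) ρ := by
  have hsz (s : ℝ) : (s : ℂ) - z ≠ 0 := fun h => hz (by simpa using congrArg im h)
  refine (integrable_const (‖z‖ + ‖1 + z ^ 2‖ / |z.im|)).mono' ?_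
    (ae_of_all _ fun s => norm_one_add_mul_div_sub_le s hz)
  exact (Continuous.div (by fun_prop) (by fun_prop) hsz).aestronglyMeasurable

theorem integrable_one_add_sq_div (x : ℝ) {y : ℝ} (hy : y ≠ 0) :
    Integrable (fun s : ℝ => (1 + s ^ 2) / ((s - x) ^ 2 + y ^ 2)) ρ := by
  refine ((integrable_one_add_mul_div_sub ρ (z := ⟨x, y⟩) hy).im.div_const y).congr
    (ae_of_all _ fun s => ?_)
  simp only [RCLike.im_to_complex, im_one_add_mul_div_sub]
  field_simp

theorem im_integral_one_add_mul_div_sub {z : ℂ} (hz : z.im ≠ 0) :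
    (∫ s : ℝ, (1 + s * z) / (s - z) ∂ρ).im
      = z.im * ∫ s : ℝ, (1 + s ^ 2) / ((s - z.re) ^ 2 + z.im ^ 2) ∂ρ := by
  rw [← integral_const_mul, ← RCLike.im_to_complex,
    ← integral_im (integrable_one_add_mul_div_sub ρ hz)]
  simp only [RCLike.im_to_complex, im_one_add_mul_div_sub]

theorem im_Ht {t a : ℝ} {z : ℂ} (hz : z.im ≠ 0) :
    ((t : ℂ) * z - ((t : ℂ) - 1) *
        ((a : ℂ) + z + ∫ s : ℝ, (1 + (s : ℂ) * z) / ((s : ℂ) - z) ∂ρ)).im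
      = z.im * (1 - (t - 1) * ∫ s : ℝ, (1 + s ^ 2) / ((s - z.re) ^ 2 + z.im ^ 2) ∂ρ) := by
  simp only [sub_im, mul_im, add_im, ofReal_re, ofReal_im, one_re, one_im, sub_re,
    im_integral_one_add_mul_div_sub ρ hz]
  ring

theorem measureReal_Icc_le_of_integral_one_add_sq_div_le {K : ℝ}
    (hK : ∀ x y : ℝ, 0 < y → ∫ s : ℝ, (1 + s ^ 2) / ((s - x) ^ 2 + y ^ 2) ∂ρ ≤ K) (a b : ℝ) :
    ρ.real (Icc a b) ≤ K / 4 * (b - a) ^ 2 := by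
  have hbound (y : ℝ) (hy : 0 < y) : ρ.real (Icc a b) ≤ K * ((b - a) ^ 2 / 4 + y ^ 2) := by
    set c := (a + b) / 2 with hc
    have hD : 0 < (b - a) ^ 2 / 4 + y ^ 2 := by positivity
    have hsub : Icc a b ⊆
        {s | 1 / ((b - a) ^ 2 / 4 + y ^ 2) ≤ (1 + s ^ 2) / ((s - c) ^ 2 + y ^ 2)} := by
      rintro s ⟨has, hsb⟩
      have : (s - c) ^ 2 ≤ (b - a) ^ 2 / 4 := by
        rw [hc]; nlinarith [mul_nonneg (sub_nonneg.2 has) (sub_nonneg.2 hsb)]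
      rw [mem_ofPred_eq]
      exact div_le_div₀ (by positivity) (by nlinarith [sq_nonneg s]) (by positivity)
        (by linarith)
    have hChebyshev := mul_meas_ge_le_integral_of_nonneg (ae_of_all _ fun s => by positivity)
      (integrable_one_add_sq_div ρ c hy.ne') (1 / ((b - a) ^ 2 / 4 + y ^ 2))
    have := (mul_le_mul_of_nonneg_left (measureReal_mono hsub) (by positivity)).trans
      (hChebyshev.trans (hK c y hy))
    rwa [one_div, inv_mul_le_iff₀ hD, mul_comm] at this
  have hlim : Tendsto (fun y : ℝ => K * ((b - a) ^ 2 / 4 + y ^ 2)) (𝓝[>] 0)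
      (𝓝 (K * ((b - a) ^ 2 / 4 + 0 ^ 2))) :=
    (Continuous.tendsto (by fun_prop) 0).mono_left nhdsWithin_le_nhds
  have := ge_of_tendsto hlim (eventually_nhdsWithin_of_forall hbound)
  linarith

end

theorem stmt_5 (ρ : Measure ℝ) [IsFiniteMeasure ρ] (a t : ℝ) (ht : 1 < t) :
    (∀ z : ℂ, 0 < z.im →
        0 < ((t : ℂ) * z - ((t : ℂ) - 1) *
          ((a : ℂ) + z + ∫ s : ℝ, (1 + (s : ℂ) * z) / ((s : ℂ) - z) ∂ρ)).im)
      ↔ ρ = 0 := by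
  constructor
  · intro h
    have hbound (x y : ℝ) (hy : 0 < y) :
        ∫ s : ℝ, (1 + s ^ 2) / ((s - x) ^ 2 + y ^ 2) ∂ρ ≤ 1 / (t - 1) := by
      have him := h ⟨x, y⟩ hy
      rw [im_Ht ρ hy.ne', mul_pos_iff_of_pos_left hy, sub_pos] at him
      rw [le_div_iff₀ (by linarith)]
      linarith
    exact Measure.eq_zero_of_measureReal_Icc_le_sq _ fun a b _ =>
      measureReal_Icc_le_of_integral_one_add_sq_div_le ρ hbound a b
  · rintro rfl z hz
    rw [im_Ht 0 hz.ne', integral_zero_measure, mul_zero, sub_zero, mul_one]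
    exact hz
end

section
/- Let ρ be a finite positive Borel measure on ℝ, t > 1, and f_t(x) = inf{y ≥ 0 : ∫ (s²+1)/((x-s)²+y²) dρ(s) ≤ 1/(t-1)}. Then for every x ∈ ℝ, f_t(x) > 0 if and only if ∫ (s²+1)/(x-s)² dρ(s) > 1/(t-1). -/
open MeasureTheory Set Filter Topology ENNReal

noncomputable def ft (ρ : Measure ℝ) (t x : ℝ) : ℝ :=
  sInf {y : ℝ | 0 ≤ y ∧
    (∫⁻ s : ℝ, ENNReal.ofReal ((s ^ 2 + 1) / ((x - s) ^ 2 + y ^ 2)) ∂ρ)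
      ≤ ENNReal.ofReal (1 / (t - 1))}

/-!
If the integral at `y = 0` is at most `1/(t-1)`, then `0` lies in the set defining `ft ρ t x`, so
`ft ρ t x = 0`. Conversely, if the infimum is `0`, Fatou's lemma along a sequence of points of the
set tending to `0` bounds the integral at `y = 0` by `1/(t-1)`. For this the set must be nonempty
(`sInf ∅ = 0` in `ℝ`); it is, because the integral tends to `0` as `y → ∞` by dominated convergence,
`ρ` being finite.
-/

lemma div_sq_add_sq_le (x s : ℝ) {y : ℝ} (hy : 1 ≤ y) :
    (s ^ 2 + 1) / ((x - s) ^ 2 + y ^ 2) ≤ 2 * x ^ 2 + 3 := by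
  have hy2 : 1 ≤ y ^ 2 := one_le_pow₀ hy
  rw [div_le_iff₀ (by positivity)]
  nlinarith [sq_nonneg (x + (x - s)), mul_nonneg (sq_nonneg x) (sq_nonneg (x - s)),
    mul_nonneg (by positivity : (0 : ℝ) ≤ 2 * x ^ 2 + 3) (sub_nonneg.2 hy2)]

lemma tendsto_div_sq_add_sq_atTop (x s : ℝ) :
    Tendsto (fun y : ℝ => (s ^ 2 + 1) / ((x - s) ^ 2 + y ^ 2)) atTop (𝓝 0) :=
  tendsto_const_nhds.div_atTop <|
    tendsto_atTop_add_const_left _ _ (tendsto_pow_atTop two_ne_zero)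

lemma tendsto_lintegral_div_sq_add_sq_atTop (ρ : Measure ℝ) [IsFiniteMeasure ρ] (x : ℝ) :
    Tendsto (fun y : ℝ => ∫⁻ s, ENNReal.ofReal ((s ^ 2 + 1) / ((x - s) ^ 2 + y ^ 2)) ∂ρ)
      atTop (𝓝 0) := by
  have h := tendsto_lintegral_filter_of_dominated_convergence (μ := ρ) (l := atTop)
    (fun _ => ENNReal.ofReal (2 * x ^ 2 + 3)) (f := fun _ => 0)
    (Eventually.of_forall fun y => by fun_prop)
    ((eventually_ge_atTop 1).mono fun y hy => ae_of_all _ fun s =>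
      ENNReal.ofReal_le_ofReal (div_sq_add_sq_le x s hy))
    (by rw [lintegral_const]; exact mul_ne_top ofReal_ne_top (measure_ne_top ρ univ))
    (ae_of_all _ fun s => ofReal_zero ▸ ENNReal.tendsto_ofReal (tendsto_div_sq_add_sq_atTop x s))
  simpa using h

lemma lintegral_div_sq_le_of_tendsto_zero (ρ : Measure ℝ) (x : ℝ) {u : ℕ → ℝ}
    (hu : Tendsto u atTop (𝓝 0)) {c : ℝ≥0∞}
    (hc : ∀ n, ∫⁻ s, ENNReal.ofReal ((s ^ 2 + 1) / ((x - s) ^ 2 + u n ^ 2)) ∂ρ ≤ c) :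
    ∫⁻ s, ENNReal.ofReal ((s ^ 2 + 1) / (x - s) ^ 2) ∂ρ ≤ c := by
  have hpointwise (s : ℝ) : ENNReal.ofReal ((s ^ 2 + 1) / (x - s) ^ 2) ≤
      liminf (fun n => ENNReal.ofReal ((s ^ 2 + 1) / ((x - s) ^ 2 + u n ^ 2))) atTop := by
    rcases eq_or_ne (x - s) 0 with hs | hs
    · simp [hs] -- the left side is the junk value `ofReal ((s²+1)/0) = 0`
    · have hlim : Tendsto (fun n => (s ^ 2 + 1) / ((x - s) ^ 2 + u n ^ 2)) atTop
          (𝓝 ((s ^ 2 + 1) / ((x - s) ^ 2 + 0 ^ 2))) :=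
        tendsto_const_nhds.div (tendsto_const_nhds.add (hu.pow 2)) (by simpa using hs)
      rw [zero_pow two_ne_zero, add_zero] at hlim
      exact (ENNReal.tendsto_ofReal hlim).liminf_eq.ge
  calc ∫⁻ s, ENNReal.ofReal ((s ^ 2 + 1) / (x - s) ^ 2) ∂ρ
      ≤ ∫⁻ s, liminf (fun n => ENNReal.ofReal ((s ^ 2 + 1) / ((x - s) ^ 2 + u n ^ 2))) atTop ∂ρ :=
        lintegral_mono hpointwise
    _ ≤ liminf (fun n => ∫⁻ s, ENNReal.ofReal ((s ^ 2 + 1) / ((x - s) ^ 2 + u n ^ 2)) ∂ρ)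
          atTop :=
        lintegral_liminf_le fun n => by fun_prop
    _ ≤ c := liminf_le_of_frequently_le' (Frequently.of_forall hc)

lemma ft_nonneg (ρ : Measure ℝ) (t x : ℝ) : 0 ≤ ft ρ t x :=
  Real.sInf_nonneg fun _ hy => hy.1

lemma ft_eq_zero_of_lintegral_le {ρ : Measure ℝ} {t x : ℝ}
    (h : ∫⁻ s, ENNReal.ofReal ((s ^ 2 + 1) / (x - s) ^ 2) ∂ρ ≤ ENNReal.ofReal (1 / (t - 1))) :
    ft ρ t x = 0 :=
  le_antisymm (csInf_le ⟨0, fun _ hy => hy.1⟩ ⟨le_rfl, by simpa using h⟩) (ft_nonneg ρ t x)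

lemma lintegral_le_of_ft_eq_zero {ρ : Measure ℝ} [IsFiniteMeasure ρ] {t x : ℝ} (ht : 1 < t)
    (h : ft ρ t x = 0) :
    ∫⁻ s, ENNReal.ofReal ((s ^ 2 + 1) / (x - s) ^ 2) ∂ρ ≤ ENNReal.ofReal (1 / (t - 1)) := by
  have hc : 0 < ENNReal.ofReal (1 / (t - 1)) := ofReal_pos.2 (one_div_pos.2 (sub_pos.2 ht))
  obtain ⟨y, hy⟩ := ((tendsto_lintegral_div_sq_add_sq_atTop ρ x).eventually
    (Iio_mem_nhds hc)).and (eventually_ge_atTop 0) |>.exists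
  obtain ⟨u, -, hu, hu_mem⟩ : ∃ u : ℕ → ℝ, _ ∧ Tendsto u atTop (𝓝 (ft ρ t x)) ∧ ∀ n, u n ∈ _ :=
    exists_seq_tendsto_sInf ⟨y, hy.2, hy.1.le⟩ ⟨0, fun _ hz => hz.1⟩
  rw [h] at hu
  exact lintegral_div_sq_le_of_tendsto_zero ρ x hu fun n => (hu_mem n).2

theorem stmt_8 (ρ : Measure ℝ) [IsFiniteMeasure ρ] (t : ℝ) (ht : 1 < t) (x : ℝ) :
    0 < ft ρ t x ↔
      ENNReal.ofReal (1 / (t - 1)) <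
        ∫⁻ s : ℝ, ENNReal.ofReal ((s ^ 2 + 1) / (x - s) ^ 2) ∂ρ := by
  rw [← not_le, ← not_le]
  exact not_congr ⟨fun h => lintegral_le_of_ft_eq_zero ht (le_antisymm h (ft_nonneg ρ t x)),
    fun h => (ft_eq_zero_of_lintegral_le h).le⟩
end

section
/- Let ρ be a finite positive Borel measure on ℝ with ρ(I) = 0 for an open interval I. Then F(x) = a + x + ∫ (1+sx)/(s-x) dρ(s) is well-defined, differentiable, and strictly increasing on I, with F'(x) = 1 + ∫ (s²+1)/(s-x)² dρ(s) for x ∈ I whenever this integral is finite on I. -/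
/-!
Since `ρ` vanishes on an open set containing `x₀`, for `x` near `x₀` the kernel
`(1 + s x) / (s - x)` only matters at `s` with `|s - x| ≥ ε` for some fixed `ε > 0`.
There it and its `x`-derivative `(s² + 1) / (s - x)²` are bounded uniformly in `s`, so
dominated convergence (with a constant dominating function, integrable as `ρ` is finite)
lets us differentiate under the integral. The derivative `1 + ∫ (s² + 1) / (s - x)² dρ`
is at least `1`, so `F` is strictly increasing.
-/

open MeasureTheory Set Metric

lemma le_abs_sub_of_notMem_ball {x₀ x s ε : ℝ} (hs : s ∉ ball x₀ (2 * ε))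
    (hx : x ∈ ball x₀ ε) : ε ≤ |s - x| := by
  simp only [mem_ball, not_lt, Real.dist_eq] at hs hx
  linarith [abs_sub_le s x x₀]

lemma hasDerivAt_one_add_mul_div_sub {s x : ℝ} (hsx : s - x ≠ 0) :
    HasDerivAt (fun y => (1 + s * y) / (s - y)) ((s ^ 2 + 1) / (s - x) ^ 2) x := by
  have hnum : HasDerivAt (fun y : ℝ => 1 + s * y) s x := by
    simpa using ((hasDerivAt_id x).const_mul s).const_add 1
  have hden : HasDerivAt (fun y : ℝ => s - y) (-1) x := by
    simpa using (hasDerivAt_id x).const_sub s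
  exact (hnum.div hden hsx).congr_deriv (by ring)

lemma abs_one_add_mul_div_sub_le {s x ε : ℝ} (hε : 0 < ε) (hsx : ε ≤ |s - x|) :
    |(1 + s * x) / (s - x)| ≤ |x| + (1 + x ^ 2) / ε := by
  have hne : s - x ≠ 0 := abs_pos.mp (hε.trans_le hsx)
  calc |(1 + s * x) / (s - x)| = |x + (1 + x ^ 2) / (s - x)| := by
        congr 1; field_simp; ring
    _ ≤ |x| + |(1 + x ^ 2) / (s - x)| := abs_add_le _ _
    _ = |x| + (1 + x ^ 2) / |s - x| := by
        rw [abs_div, abs_of_pos (by positivity : (0 : ℝ) < 1 + x ^ 2)]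
    _ ≤ |x| + (1 + x ^ 2) / ε := by gcongr

lemma sq_add_one_div_sub_sq_le {s x R ε : ℝ} (hε : 0 < ε) (hx : |x| ≤ R)
    (hsx : ε ≤ |s - x|) :
    (s ^ 2 + 1) / (s - x) ^ 2 ≤ 2 + (2 * R ^ 2 + 1) / ε ^ 2 := by
  have hpos : 0 < (s - x) ^ 2 := by
    rw [← sq_abs]; exact pow_pos (hε.trans_le hsx) 2
  have hε2 : ε ^ 2 ≤ (s - x) ^ 2 := by
    rw [← sq_abs (s - x)]; gcongr
  have hx2 : x ^ 2 ≤ R ^ 2 := by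
    rw [← sq_abs x]; gcongr
  calc (s ^ 2 + 1) / (s - x) ^ 2 ≤ (2 * (s - x) ^ 2 + (2 * R ^ 2 + 1)) / (s - x) ^ 2 := by
        refine div_le_div_of_nonneg_right ?_ hpos.le
        nlinarith [sq_nonneg (s - 2 * x)]
    _ = 2 + (2 * R ^ 2 + 1) / (s - x) ^ 2 := by rw [add_div, mul_div_cancel_right₀ _ hpos.ne']
    _ ≤ 2 + (2 * R ^ 2 + 1) / ε ^ 2 := by gcongr

theorem hasDerivAt_integral_one_add_mul_div_sub {ρ : Measure ℝ} [IsFiniteMeasure ρ]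
    {U : Set ℝ} (hU : IsOpen U) (hρU : ρ U = 0) {x₀ : ℝ} (hx₀ : x₀ ∈ U) :
    HasDerivAt (fun x => ∫ s, (1 + s * x) / (s - x) ∂ρ)
      (∫ s, (s ^ 2 + 1) / (s - x₀) ^ 2 ∂ρ) x₀ := by
  obtain ⟨r, hr, hball⟩ := isOpen_iff.mp hU x₀ hx₀
  set ε := r / 2
  have hε : 0 < ε := half_pos hr
  have hsep : ∀ᵐ s ∂ρ, ∀ x ∈ ball x₀ ε, ε ≤ |s - x| := by
    filter_upwards [measure_eq_zero_iff_ae_notMem.mp hρU] with s hs x hx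
    refine le_abs_sub_of_notMem_ball (fun h => hs (hball ?_)) hx
    rwa [show 2 * ε = r by ring] at h
  have hx_le : ∀ x ∈ ball x₀ ε, |x| ≤ |x₀| + ε := fun x hx => by
    rw [mem_ball, Real.dist_eq] at hx
    linarith [abs_sub_abs_le_abs_sub x x₀]
  have hmeas : ∀ x, AEStronglyMeasurable (fun s : ℝ => (1 + s * x) / (s - x)) ρ := fun x =>
    (Measurable.div (by fun_prop) (by fun_prop)).aestronglyMeasurable
  have hint : Integrable (fun s => (1 + s * x₀) / (s - x₀)) ρ := by
    refine (integrable_const (|x₀| + (1 + x₀ ^ 2) / ε)).mono' (hmeas x₀) ?_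
    filter_upwards [hsep] with s hs
    exact abs_one_add_mul_div_sub_le hε (hs x₀ (mem_ball_self hε))
  refine (hasDerivAt_integral_of_dominated_loc_of_deriv_le
    (F' := fun x s => (s ^ 2 + 1) / (s - x) ^ 2)
    (bound := fun _ => 2 + (2 * (|x₀| + ε) ^ 2 + 1) / ε ^ 2) (ball_mem_nhds x₀ hε)
    (.of_forall hmeas) hint (Measurable.div (by fun_prop) (by fun_prop)).aestronglyMeasurable
    ?_ (integrable_const _) ?_).2
  · filter_upwards [hsep] with s hs x hx
    rw [Real.norm_of_nonneg (by positivity)]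
    exact sq_add_one_div_sub_sq_le hε (hx_le x hx) (hs x hx)
  · filter_upwards [hsep] with s hs x hx
    exact hasDerivAt_one_add_mul_div_sub (abs_pos.mp (hε.trans_le (hs x hx)))

theorem stmt_12_general (ρ : Measure ℝ) [IsFiniteMeasure ρ] (a c d : ℝ)
    (hρI : ρ (Ioo c d) = 0)
    (F : ℝ → ℝ)
    (hF : ∀ x ∈ Ioo c d, F x = a + x + ∫ s : ℝ, (1 + s * x) / (s - x) ∂ρ) :
    StrictMonoOn F (Ioo c d) ∧
      ∀ x ∈ Ioo c d,
        HasDerivAt F (1 + ∫ s : ℝ, (s ^ 2 + 1) / (s - x) ^ 2 ∂ρ) x := by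
  have hderiv : ∀ x ∈ Ioo c d,
      HasDerivAt F (1 + ∫ s : ℝ, (s ^ 2 + 1) / (s - x) ^ 2 ∂ρ) x := fun x hx =>
    (((hasDerivAt_id x).const_add a).add
      (hasDerivAt_integral_one_add_mul_div_sub isOpen_Ioo hρI hx)).congr_of_eventuallyEq
      (Filter.eventually_of_mem (isOpen_Ioo.mem_nhds hx) hF)
  refine ⟨strictMonoOn_of_deriv_pos (convex_Ioo c d)
    (fun x hx => (hderiv x hx).continuousAt.continuousWithinAt) fun x hx => ?_, hderiv⟩
  rw [interior_Ioo] at hx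
  rw [(hderiv x hx).deriv]
  exact add_pos_of_pos_of_nonneg one_pos (integral_nonneg fun s => by positivity)

theorem stmt_12 (ρ : Measure ℝ) [IsFiniteMeasure ρ] (a c d : ℝ) (hcd : c < d)
    (hρI : ρ (Ioo c d) = 0)
    (hfin : ∀ x ∈ Ioo c d,
      (∫⁻ s : ℝ, ENNReal.ofReal ((s ^ 2 + 1) / (s - x) ^ 2) ∂ρ) ≠ ⊤)
    (F : ℝ → ℝ)
    (hF : ∀ x ∈ Ioo c d, F x = a + x + ∫ s : ℝ, (1 + s * x) / (s - x) ∂ρ) :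
    StrictMonoOn F (Ioo c d) ∧
      ∀ x ∈ Ioo c d,
        HasDerivAt F (1 + ∫ s : ℝ, (s ^ 2 + 1) / (s - x) ^ 2 ∂ρ) x :=
  stmt_12_general ρ a c d hρI F hF
end

section
/- Let μ be a Borel probability measure on ℝ, α ∈ ℝ an atom of μ with μ({α}) = 1 - 1/t for some t > 1, and let ρ be the measure in the Nevanlinna representation of F_μ = 1/G_μ. Then ∫ (s²+1)/(s-α)² dρ(s) = 1/(t-1), the nontangential boundary value F_μ(α) equals 0, and the Julia–Carathéodory derivative satisfies F_μ'(α) = 1/μ({α}) = 1 + ∫ (s²+1)/(s-α)² dρ(s). -/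
/-!
Dominated convergence on a Stolz angle gives `(z - α) G_μ(z) → μ{α}`, hence
`F_μ(z) / (z - α) → 1 / μ{α}` and `F_μ(z) → 0`. On the vertical ray `z = α + iy` the Nevanlinna
representation gives `Im F_μ(z) / y = 1 + ∫ (s² + 1) / ((s - α)² + y²) dρ`, so these integrals tend
to `1 / μ{α} - 1 = 1 / (t - 1)`. They increase as `y ↓ 0`, and monotone convergence identifies the
limit with `∫ (s² + 1) / (s - α)² dρ`, once `ρ{α} = 0` is known.
-/

open MeasureTheory Filter Topology Complex

def upperStolzAngle (α M : ℝ) : Set ℂ := {z : ℂ | 0 < z.im ∧ |z.re - α| ≤ M * z.im}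

lemma ofReal_ne_of_pos_im {z : ℂ} (hz : 0 < z.im) (s : ℝ) : (s : ℂ) ≠ z := fun h => by
  simp [← h] at hz

lemma im_le_norm_sub_ofReal (z : ℂ) (s : ℝ) : z.im ≤ ‖z - s‖ := by
  simpa using Complex.im_le_norm (z - s)

lemma ofReal_notMem_upperStolzAngle (α M : ℝ) : (α : ℂ) ∉ upperStolzAngle α M := fun h => by
  simpa using h.1

lemma norm_sub_le_of_mem_upperStolzAngle {α M : ℝ} {z : ℂ} (hz : z ∈ upperStolzAngle α M) :
    ‖z - α‖ ≤ √(M ^ 2 + 1) * z.im := by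
  obtain ⟨him, hre⟩ := hz
  have hre_sq : (z.re - α) ^ 2 ≤ (M * z.im) ^ 2 := sq_le_sq' (abs_le.1 hre).1 (abs_le.1 hre).2
  rw [← Real.sqrt_sq (norm_nonneg _), ← Real.sqrt_sq him.le, ← Real.sqrt_mul (by positivity),
    Complex.sq_norm, Complex.normSq_apply]
  gcongr
  simp only [sub_re, sub_im, ofReal_re, ofReal_im, sub_zero]
  nlinarith

lemma norm_sub_mul_inv_sub_le {α M : ℝ} {z : ℂ} (hz : z ∈ upperStolzAngle α M) (s : ℝ) :
    ‖(z - α) * (z - s)⁻¹‖ ≤ √(M ^ 2 + 1) := by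
  have hpos : 0 < ‖z - s‖ := norm_pos_iff.2 (sub_ne_zero.2 (ofReal_ne_of_pos_im hz.1 s).symm)
  rw [norm_mul, norm_inv, ← div_eq_mul_inv, div_le_iff₀ hpos]
  exact (norm_sub_le_of_mem_upperStolzAngle hz).trans
    (mul_le_mul_of_nonneg_left (im_le_norm_sub_ofReal z s) (Real.sqrt_nonneg _))

lemma tendsto_sub_mul_inv_sub (α M s : ℝ) :
    Tendsto (fun z : ℂ => (z - α) * (z - s)⁻¹) (𝓝[upperStolzAngle α M] α)
      (𝓝 (({α} : Set ℝ).indicator (fun _ => 1) s)) := by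
  rcases eq_or_ne s α with rfl | hs
  · rw [Set.indicator_of_mem (Set.mem_singleton s)]
    refine tendsto_const_nhds.congr' ?_
    filter_upwards [self_mem_nhdsWithin] with z hz
    exact (mul_inv_cancel₀ (sub_ne_zero.2 (ofReal_ne_of_pos_im hz.1 s).symm)).symm
  · have hne : (α : ℂ) - s ≠ 0 := sub_ne_zero.2 (by exact_mod_cast hs.symm)
    have hcont : ContinuousAt (fun z : ℂ => (z - α) * (z - s)⁻¹) α :=
      (continuousAt_id.sub continuousAt_const).mul
        ((continuousAt_id.sub continuousAt_const).inv₀ hne)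
    simpa [Set.indicator_of_notMem (Set.mem_singleton_iff.not.2 hs)] using
      hcont.continuousWithinAt.tendsto (s := upperStolzAngle α M)

lemma tendsto_sub_mul_cauchyTransform (μ : Measure ℝ) [IsFiniteMeasure μ] (α M : ℝ) :
    Tendsto (fun z : ℂ => (z - α) * ∫ s : ℝ, (z - s)⁻¹ ∂μ) (𝓝[upperStolzAngle α M] α)
      (𝓝 (μ.real {α})) := by
  have hlim := tendsto_integral_filter_of_dominated_convergence (μ := μ) (fun _ => √(M ^ 2 + 1))
    (F := fun (z : ℂ) (s : ℝ) => (z - α) * (z - s)⁻¹)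
    (f := fun s => ({α} : Set ℝ).indicator (fun _ => 1) s)
    ?meas ?bound (integrable_const _) (ae_of_all _ (tendsto_sub_mul_inv_sub α M))
  case meas =>
    filter_upwards [self_mem_nhdsWithin] with z hz
    exact (continuous_const.mul ((continuous_const.sub continuous_ofReal).inv₀
      fun s => sub_ne_zero.2 (ofReal_ne_of_pos_im hz.1 s).symm)).aestronglyMeasurable
  case bound =>
    filter_upwards [self_mem_nhdsWithin] with z hz
    exact ae_of_all _ (norm_sub_mul_inv_sub_le hz)
  rw [integral_indicator_const _ (measurableSet_singleton α)] at hlim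
  simpa only [integral_const_mul, real_smul, mul_one] using hlim

lemma tendsto_inv_cauchyTransform_div_sub (μ : Measure ℝ) [IsFiniteMeasure μ] {F : ℂ → ℂ}
    (hF : ∀ z : ℂ, 0 < z.im → F z = (∫ s : ℝ, (z - (s : ℂ))⁻¹ ∂μ)⁻¹) {α : ℝ}
    (hα : μ.real {α} ≠ 0) (M : ℝ) :
    Tendsto (fun z : ℂ => F z / (z - α)) (𝓝[upperStolzAngle α M] α)
      (𝓝 (((μ.real {α})⁻¹ : ℝ) : ℂ)) := by
  have h := (tendsto_sub_mul_cauchyTransform μ α M).inv₀ (ofReal_ne_zero.2 hα)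
  rw [← ofReal_inv] at h
  refine h.congr' ?_
  filter_upwards [self_mem_nhdsWithin] with z hz
  rw [hF z hz.1, mul_inv, div_eq_mul_inv, mul_comm]

lemma tendsto_zero_of_tendsto_div_sub {f : ℂ → ℂ} {w c : ℂ} {S : Set ℂ} (hw : w ∉ S)
    (h : Tendsto (fun z => f z / (z - w)) (𝓝[S] w) (𝓝 c)) : Tendsto f (𝓝[S] w) (𝓝 0) := by
  have hsub : Tendsto (fun z => z - w) (𝓝[S] w) (𝓝 0) :=
    tendsto_nhdsWithin_of_tendsto_nhds (by simpa using (continuous_sub_right w).tendsto w)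
  have hprod := hsub.mul h
  rw [zero_mul] at hprod
  refine hprod.congr' ?_
  filter_upwards [self_mem_nhdsWithin] with z hz
  exact mul_div_cancel₀ _ (sub_ne_zero.2 (ne_of_mem_of_not_mem hz hw))

lemma nevanlinnaKernel_eq {z : ℂ} (hz : 0 < z.im) (s : ℝ) :
    (1 + s * z) / (s - z) = z + (1 + z ^ 2) / (s - z) := by
  have := sub_ne_zero.2 (ofReal_ne_of_pos_im hz s)
  field_simp
  ring

lemma im_nevanlinnaKernel (z : ℂ) (s : ℝ) :
    ((1 + s * z) / (s - z)).im = z.im * ((s ^ 2 + 1) / normSq (s - z)) := by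
  simp only [div_im, normSq_apply, add_re, add_im, mul_re, mul_im, sub_re, sub_im, ofReal_re,
    ofReal_im, one_re, one_im]
  ring

lemma integrable_nevanlinnaKernel (ρ : Measure ℝ) [IsFiniteMeasure ρ] {z : ℂ} (hz : 0 < z.im) :
    Integrable (fun s : ℝ => (1 + s * z) / (s - z)) ρ := by
  refine Integrable.mono' (integrable_const (‖z‖ + ‖1 + z ^ 2‖ / z.im))
    ((by fun_prop : Continuous fun s : ℝ => 1 + s * z).div (by fun_prop)
      fun s => sub_ne_zero.2 (ofReal_ne_of_pos_im hz s)).aestronglyMeasurable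
    (ae_of_all _ fun s => ?_)
  rw [nevanlinnaKernel_eq hz]
  refine (norm_add_le _ _).trans (add_le_add_right ?_ _)
  rw [norm_div]
  gcongr
  simpa [norm_sub_rev] using im_le_norm_sub_ofReal z s

lemma im_integral_nevanlinnaKernel (ρ : Measure ℝ) [IsFiniteMeasure ρ] {z : ℂ} (hz : 0 < z.im) :
    (∫ s : ℝ, (1 + s * z) / (s - z) ∂ρ).im = z.im * ∫ s : ℝ, (s ^ 2 + 1) / normSq (s - z) ∂ρ := by
  have h := integral_im (𝕜 := ℂ) (integrable_nevanlinnaKernel ρ hz)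
  simp only [RCLike.im_to_complex, im_nevanlinnaKernel] at h
  rw [← h, integral_const_mul]

/-- `y * poissonWeight α y s` is the imaginary part of the Nevanlinna kernel `(1 + s z) / (s - z)`
at `z = α + iy`. -/
noncomputable def poissonWeight (α y s : ℝ) : ℝ := (s ^ 2 + 1) / ((s - α) ^ 2 + y ^ 2)

lemma normSq_ofReal_sub_vertical (α y s : ℝ) : normSq (s - (α + y * I)) = (s - α) ^ 2 + y ^ 2 := by
  simp only [normSq_apply, sub_re, sub_im, add_re, add_im, mul_re, mul_im, ofReal_re, ofReal_im,
    I_re, I_im]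
  ring

lemma integrable_poissonWeight (ρ : Measure ℝ) [IsFiniteMeasure ρ] (α : ℝ) {y : ℝ} (hy : 0 < y) :
    Integrable (poissonWeight α y) ρ := by
  have him : ((α : ℂ) + y * I).im = y := by simp
  refine ((integrable_nevanlinnaKernel ρ (him ▸ hy)).im.div_const y).congr (ae_of_all _ fun s => ?_)
  simp only [RCLike.im_to_complex, im_nevanlinnaKernel, him, normSq_ofReal_sub_vertical,
    poissonWeight]
  field_simp

lemma tendsto_vertical_upperStolzAngle (α : ℝ) {M : ℝ} (hM : 0 ≤ M) :
    Tendsto (fun y : ℝ => (α : ℂ) + y * I) (𝓝[>] 0) (𝓝[upperStolzAngle α M] α) := by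
  refine tendsto_nhdsWithin_iff.2 ⟨?_, ?_⟩
  · have hcont : Continuous fun y : ℝ => (α : ℂ) + y * I := by fun_prop
    exact tendsto_nhdsWithin_of_tendsto_nhds (by simpa using hcont.tendsto 0)
  · filter_upwards [self_mem_nhdsWithin] with y (hy : 0 < y)
    exact ⟨by simpa using hy, by simpa using mul_nonneg hM hy.le⟩

section Nevanlinna

variable (ρ : Measure ℝ) [IsFiniteMeasure ρ] {a : ℝ} {F : ℂ → ℂ}

lemma re_div_vertical_of_nevanlinna
    (hNev : ∀ z : ℂ, 0 < z.im →
      F z = (a : ℂ) + z + ∫ s : ℝ, (1 + (s : ℂ) * z) / ((s : ℂ) - z) ∂ρ)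
    (α : ℝ) {y : ℝ} (hy : 0 < y) :
    (F (α + y * I) / (y * I)).re = 1 + ∫ s : ℝ, poissonWeight α y s ∂ρ := by
  have hz : 0 < ((α : ℂ) + y * I).im := by simpa using hy
  rw [hNev _ hz, div_re, add_im, im_integral_nevanlinnaKernel ρ hz]
  simp_rw [normSq_ofReal_sub_vertical]
  simp only [add_im, ofReal_re, ofReal_im, mul_re, mul_im, I_re, I_im, normSq_apply, poissonWeight]
  field_simp
  ring

lemma tendsto_integral_poissonWeight_of_nevanlinna
    (hNev : ∀ z : ℂ, 0 < z.im →
      F z = (a : ℂ) + z + ∫ s : ℝ, (1 + (s : ℂ) * z) / ((s : ℂ) - z) ∂ρ) {α c : ℝ}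
    (h : Tendsto (fun z : ℂ => F z / (z - α)) (𝓝[upperStolzAngle α 1] α) (𝓝 c)) :
    Tendsto (fun y : ℝ => ∫ s : ℝ, poissonWeight α y s ∂ρ) (𝓝[>] 0) (𝓝 (c - 1)) := by
  have hre := (continuous_re.tendsto _).comp
    (h.comp (tendsto_vertical_upperStolzAngle α zero_le_one))
  rw [ofReal_re] at hre
  refine (hre.sub_const 1).congr' ?_
  filter_upwards [self_mem_nhdsWithin] with y (hy : 0 < y)
  simp only [Function.comp_apply, add_sub_cancel_left, re_div_vertical_of_nevanlinna ρ hNev α hy]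

end Nevanlinna

section PoissonWeight

variable {ρ : Measure ℝ} [IsFiniteMeasure ρ] {α L : ℝ}

lemma measureReal_singleton_mul_le_integral_poissonWeight {y : ℝ} (hy : 0 < y) :
    ρ.real {α} * ((α ^ 2 + 1) / y ^ 2) ≤ ∫ s : ℝ, poissonWeight α y s ∂ρ := by
  have h := setIntegral_le_integral (s := {α}) (integrable_poissonWeight ρ α hy)
    (ae_of_all _ fun s => by unfold poissonWeight; positivity)
  rwa [integral_singleton, smul_eq_mul, poissonWeight, sub_self, zero_pow two_ne_zero,
    zero_add] at h

/-- A mass at `α` would make the integrals blow up like `y⁻²`. -/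
lemma measure_singleton_eq_zero_of_tendsto_integral_poissonWeight
    (hg : Tendsto (fun y : ℝ => ∫ s : ℝ, poissonWeight α y s ∂ρ) (𝓝[>] 0) (𝓝 L)) :
    ρ {α} = 0 := by
  have hscale : Tendsto (fun y : ℝ => y ^ 2 / (α ^ 2 + 1)) (𝓝[>] 0) (𝓝 0) := by
    have hcont : Continuous fun y : ℝ => y ^ 2 / (α ^ 2 + 1) := by fun_prop
    exact tendsto_nhdsWithin_of_tendsto_nhds (by simpa using hcont.tendsto 0)
  have hle : ∀ᶠ y in 𝓝[>] (0 : ℝ),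
      ρ.real {α} ≤ y ^ 2 / (α ^ 2 + 1) * ∫ s : ℝ, poissonWeight α y s ∂ρ := by
    filter_upwards [self_mem_nhdsWithin] with y (hy : 0 < y)
    refine le_trans (le_of_eq ?_) (mul_le_mul_of_nonneg_left
      (measureReal_singleton_mul_le_integral_poissonWeight hy) (by positivity))
    field_simp
  have hzero : ρ.real {α} ≤ 0 := ge_of_tendsto (by simpa using hscale.mul hg) hle
  exact (measureReal_eq_zero_iff).1 (le_antisymm hzero measureReal_nonneg)

lemma tendsto_poissonWeight_zero {s : ℝ} (hs : s ≠ α) :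
    Tendsto (fun y : ℝ => poissonWeight α y s) (𝓝 0) (𝓝 ((s ^ 2 + 1) / (s - α) ^ 2)) := by
  have hne : (s - α) ^ 2 + (0 : ℝ) ^ 2 ≠ 0 := by simpa using sub_ne_zero.2 hs
  have hcont : ContinuousAt (fun y : ℝ => poissonWeight α y s) 0 :=
    continuousAt_const.div (by fun_prop) hne
  simpa [poissonWeight] using hcont.tendsto

lemma lintegral_ofReal_div_sq_eq_of_tendsto_integral_poissonWeight
    (hg : Tendsto (fun y : ℝ => ∫ s : ℝ, poissonWeight α y s ∂ρ) (𝓝[>] 0) (𝓝 L)) :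
    ∫⁻ s : ℝ, ENNReal.ofReal ((s ^ 2 + 1) / (s - α) ^ 2) ∂ρ = ENNReal.ofReal L := by
  obtain ⟨u, hu_anti, hu_pos, hu⟩ := exists_seq_strictAnti_tendsto_nhdsWithin (0 : ℝ)
  have hae : ∀ᵐ s ∂ρ, s ≠ α := ae_iff.2 (by
    simpa using measure_singleton_eq_zero_of_tendsto_integral_poissonWeight hg)
  refine tendsto_nhds_unique (lintegral_tendsto_of_tendsto_of_monotone
    (f := fun n s => ENNReal.ofReal (poissonWeight α (u n) s)) ?meas ?mono ?lim) ?_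
  case meas =>
    exact fun n => (by unfold poissonWeight; fun_prop : Measurable _).aemeasurable
  case mono =>
    refine ae_of_all _ fun s i j hij => ENNReal.ofReal_le_ofReal ?_
    have := hu_pos j
    have := hu_anti.antitone hij
    unfold poissonWeight
    gcongr
  case lim =>
    filter_upwards [hae] with s hs
    exact (ENNReal.continuous_ofReal.tendsto _).comp
      ((tendsto_poissonWeight_zero hs).comp (tendsto_nhdsWithin_iff.1 hu).1)
  have hofReal : ∀ n, ∫⁻ s : ℝ, ENNReal.ofReal (poissonWeight α (u n) s) ∂ρ
      = ENNReal.ofReal (∫ s : ℝ, poissonWeight α (u n) s ∂ρ) := fun n =>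
    (ofReal_integral_eq_lintegral_ofReal (integrable_poissonWeight ρ α (hu_pos n))
      (ae_of_all _ fun s => by unfold poissonWeight; positivity)).symm
  exact ((ENNReal.continuous_ofReal.tendsto _).comp (hg.comp hu)).congr fun n => (hofReal n).symm

end PoissonWeight

theorem stmt_13 (μ : Measure ℝ) [IsProbabilityMeasure μ]
    (ρ : Measure ℝ) [IsFiniteMeasure ρ] (a : ℝ)
    (F : ℂ → ℂ)
    (hF : ∀ z : ℂ, 0 < z.im → F z = (∫ s : ℝ, (z - (s : ℂ))⁻¹ ∂μ)⁻¹)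
    (hNev : ∀ z : ℂ, 0 < z.im →
      F z = (a : ℂ) + z + ∫ s : ℝ, (1 + (s : ℂ) * z) / ((s : ℂ) - z) ∂ρ)
    (t α : ℝ) (ht : 1 < t) (hatom : (μ {α}).toReal = 1 - 1 / t) :
    (∫⁻ s : ℝ, ENNReal.ofReal ((s ^ 2 + 1) / (s - α) ^ 2) ∂ρ)
        = ENNReal.ofReal (1 / (t - 1)) ∧
    (∀ M : ℝ, 0 < M →
      Tendsto F (𝓝[{z : ℂ | 0 < z.im ∧ |z.re - α| ≤ M * z.im}] (α : ℂ)) (𝓝 0)) ∧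
    (∀ M : ℝ, 0 < M →
      Tendsto (fun z : ℂ => F z / (z - (α : ℂ)))
        (𝓝[{z : ℂ | 0 < z.im ∧ |z.re - α| ≤ M * z.im}] (α : ℂ))
        (𝓝 ((((μ {α}).toReal)⁻¹ : ℝ) : ℂ))) ∧
    ((μ {α}).toReal)⁻¹ =
      1 + (∫⁻ s : ℝ, ENNReal.ofReal ((s ^ 2 + 1) / (s - α) ^ 2) ∂ρ).toReal := by
  change μ.real {α} = 1 - 1 / t at hatom
  have hatom_pos : 0 < μ.real {α} := by
    rw [hatom, sub_pos, div_lt_one (by linarith)]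
    exact ht
  have hdiv := tendsto_inv_cauchyTransform_div_sub μ hF hatom_pos.ne'
  have hlint := lintegral_ofReal_div_sq_eq_of_tendsto_integral_poissonWeight
    (tendsto_integral_poissonWeight_of_nevanlinna ρ hNev (hdiv 1))
  have hval : (μ.real {α})⁻¹ - 1 = 1 / (t - 1) := by
    rw [hatom]
    field_simp [show t - 1 ≠ 0 by linarith]
    ring
  refine ⟨hlint.trans (congrArg _ hval),
    fun M _ => tendsto_zero_of_tendsto_div_sub (ofReal_notMem_upperStolzAngle α M) (hdiv M),
    fun M _ => hdiv M, ?_⟩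
  rw [hlint, ENNReal.toReal_ofReal (hval ▸ one_div_nonneg.2 (by linarith))]
  exact (add_sub_cancel _ _).symm
end

section
/- Let ν = Σ_{n≥1} 2^{-n} δ_{2^n} and g(x) = ∫ dν(s)/(s-x)². For each n ≥ 1, if x_n = (2^n + 2^{n+1})/2 is the midpoint of I_n = (2^n, 2^{n+1}), then g(x_n) ≤ 2^{-2n+2}. Consequently, for every t > 1 there exist infinitely many n with inf_{I_n} g < 1/(t-1). -/
/-! The atoms of `nu` are the powers `2 ^ (m + 1)`, and the midpoint `3 * 2 ^ n` of
`(2 ^ (n + 1), 2 ^ (n + 2))` lies at distance at least `2 ^ n` from every power of two. So the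
integrand of `gfun` at that midpoint is at most `(4 ^ n)⁻¹` on the support of the probability
measure `nu`, which bounds `gfun` there. As `(4 ^ n)⁻¹ → 0`, the bound eventually drops below any
`1 / (t - 1)` with `t > 1`. -/

open MeasureTheory Set ENNReal

noncomputable def nu : Measure ℝ :=
  Measure.sum (fun n : ℕ => ((2 : ℝ≥0∞)⁻¹ ^ (n + 1)) • Measure.dirac ((2 : ℝ) ^ (n + 1)))

noncomputable def gfun (x : ℝ) : ℝ≥0∞ :=
  ∫⁻ s : ℝ, ENNReal.ofReal (((s - x) ^ 2)⁻¹) ∂nu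

open Filter

lemma lintegral_nu (f : ℝ → ℝ≥0∞) :
    ∫⁻ s, f s ∂nu = ∑' m : ℕ, (2 : ℝ≥0∞)⁻¹ ^ (m + 1) * f (2 ^ (m + 1)) := by
  simp only [nu, lintegral_sum_measure, lintegral_smul_measure, lintegral_dirac, smul_eq_mul]

lemma lintegral_nu_le_of_forall_le {f : ℝ → ℝ≥0∞} {c : ℝ≥0∞}
    (h : ∀ m : ℕ, f (2 ^ (m + 1)) ≤ c) : ∫⁻ s, f s ∂nu ≤ c :=
  calc ∫⁻ s, f s ∂nu ≤ ∑' m : ℕ, (2 : ℝ≥0∞)⁻¹ ^ (m + 1) * c := by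
        rw [lintegral_nu]; exact ENNReal.tsum_le_tsum fun m ↦ mul_le_mul_right (h m) _
    _ = c := by
        rw [ENNReal.tsum_mul_right, ENNReal.tsum_geometric_add_one, one_sub_inv_two, inv_inv,
          ENNReal.inv_mul_cancel two_ne_zero ofNat_ne_top, one_mul]

lemma two_pow_le_abs_two_pow_sub_three_mul_two_pow (m n : ℕ) :
    (2 : ℝ) ^ n ≤ |2 ^ m - 3 * 2 ^ n| := by
  have hn : (0 : ℝ) < 2 ^ n := by positivity
  rcases le_or_gt m n with hmn | hnm
  · have : (2 : ℝ) ^ m ≤ 2 ^ n := pow_le_pow_right₀ one_le_two hmn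
    rw [abs_sub_comm, abs_of_pos (by linarith)]
    linarith
  obtain rfl | hnm := (Nat.succ_le_of_lt hnm).eq_or_lt
  · rw [pow_succ, abs_sub_comm, abs_of_pos (by linarith)]
    linarith
  · have : (2 : ℝ) ^ n * 4 ≤ 2 ^ m :=
      calc (2 : ℝ) ^ n * 4 = 2 ^ (n + 2) := by ring
        _ ≤ 2 ^ m := pow_le_pow_right₀ one_le_two hnm
    rw [abs_of_nonneg (by linarith)]
    linarith

lemma gfun_three_mul_two_pow_le (n : ℕ) : gfun (3 * 2 ^ n) ≤ ENNReal.ofReal ((4 ^ n)⁻¹) := by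
  refine lintegral_nu_le_of_forall_le fun m ↦ ENNReal.ofReal_le_ofReal ?_
  have hsq : (4 : ℝ) ^ n ≤ (2 ^ (m + 1) - 3 * 2 ^ n) ^ 2 := by
    rw [← sq_abs, show (4 : ℝ) ^ n = (2 ^ n) ^ 2 by rw [← pow_mul, mul_comm, pow_mul]; norm_num]
    exact pow_le_pow_left₀ (by positivity) (two_pow_le_abs_two_pow_sub_three_mul_two_pow _ _) 2
  exact inv_anti₀ (by positivity) hsq

theorem stmt_17 :
    (∀ n : ℕ,
      gfun (((2 : ℝ) ^ (n + 1) + (2 : ℝ) ^ (n + 2)) / 2)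
        ≤ ENNReal.ofReal (4 / 4 ^ (n + 1))) ∧
    ∀ t : ℝ, 1 < t →
      {n : ℕ | ∃ x ∈ Ioo ((2 : ℝ) ^ (n + 1)) ((2 : ℝ) ^ (n + 2)),
        gfun x < ENNReal.ofReal (1 / (t - 1))}.Infinite := by
  have midpoint_eq (n : ℕ) : ((2 : ℝ) ^ (n + 1) + 2 ^ (n + 2)) / 2 = 3 * 2 ^ n := by ring
  have bound_eq (n : ℕ) : (4 : ℝ) / 4 ^ (n + 1) = (4 ^ n)⁻¹ := by field_simp; ring
  refine ⟨fun n ↦ by simpa only [midpoint_eq, bound_eq] using gfun_three_mul_two_pow_le n,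
    fun t ht ↦ ?_⟩
  have h_small : ∀ᶠ n : ℕ in atTop, ((4 : ℝ) ^ n)⁻¹ < 1 / (t - 1) :=
    (tendsto_inv_atTop_zero.comp (tendsto_pow_atTop_atTop_of_one_lt (by norm_num))).eventually
      (gt_mem_nhds (by simpa using ht))
  refine Nat.frequently_atTop_iff_infinite.mp (h_small.mono fun n hn ↦ ?_).frequently
  have hpos : (0 : ℝ) < 2 ^ n := by positivity
  refine ⟨3 * 2 ^ n, ⟨by rw [pow_succ]; linarith, by rw [pow_add]; linarith⟩, ?_⟩
  exact (gfun_three_mul_two_pow_le n).trans_lt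
    ((ENNReal.ofReal_lt_ofReal_iff (one_div_pos.mpr (sub_pos.mpr ht))).mpr hn)
end

section
/- For 0 < ε < 1 and g_ε(x) = (εx² + ε(1-ε))/((x² - 1 + ε)²), the equation g_ε(x) = ε/(1-ε) holds exactly at x = 0 and x = ±√(3(1-ε)). -/
theorem stmt_19 (ε : ℝ) (hε : 0 < ε) (hε1 : ε < 1) (x : ℝ) :
    (ε * x ^ 2 + ε * (1 - ε)) / (x ^ 2 - 1 + ε) ^ 2 = ε / (1 - ε) ↔
      (x = 0 ∨ x = Real.sqrt (3 * (1 - ε)) ∨ x = -Real.sqrt (3 * (1 - ε))) := by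
  have hc : 0 < 1 - ε := by linarith
  have hs : Real.sqrt (3 * (1 - ε)) ^ 2 = 3 * (1 - ε) :=
    Real.sq_sqrt (by positivity)
  constructor
  · intro h
    have hden : x ^ 2 - 1 + ε ≠ 0 := by
      intro h0
      rw [h0] at h
      simp at h
      have : (0:ℝ) < ε / (1 - ε) := by positivity
      rw [← h] at this
      exact lt_irrefl _ this
    have key : x ^ 2 * (x ^ 2 - 3 * (1 - ε)) = 0 := by
      field_simp at h
      nlinarith [h, sq_nonneg x]
    rcases mul_eq_zero.mp key with h1 | h2
    · left; exact pow_eq_zero_iff two_ne_zero |>.mp h1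
    · right
      have : (x - Real.sqrt (3 * (1 - ε))) * (x + Real.sqrt (3 * (1 - ε))) = 0 := by
        nlinarith [hs]
      rcases mul_eq_zero.mp this with h3 | h4
      · left; linarith
      · right; linarith
  · have main : ∀ y : ℝ, y ^ 2 = 3 * (1 - ε) →
        (ε * y ^ 2 + ε * (1 - ε)) / (y ^ 2 - 1 + ε) ^ 2 = ε / (1 - ε) := by
      intro y hy
      rw [hy, div_eq_div_iff (ne_of_gt (by nlinarith [mul_pos hc hc])) (ne_of_gt hc)]
      ring
    rintro (rfl | rfl | rfl)
    · rw [div_eq_div_iff (ne_of_gt (by nlinarith [mul_pos hc hc])) (ne_of_gt hc)]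
      ring
    · exact main _ hs
    · exact main _ (by rw [neg_sq]; exact hs)
end
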